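/- Let f : ℝ → ℝ² be L-periodic and continuously differentiable. Then for any h > 0, ∫₀ᴸ sup_{λ ∈ [-h,h]} |f(t+λ) − f(t)| dt ≤ 2h · ∫₀ᴸ |f'(t)| dt. -/

import Mathlib

/-! Bound each displacement `f (t + λ) - f t` by the integral of `‖f'‖` over `[t - h, t + h]`,
integrate in `t`, and swap the integrals: by periodicity every translate of `‖f'‖` has the same
integral over a period, so the double integral is `2h ∫₀ᴸ ‖f'‖`. -/

open MeasureTheory Set intervalIntegral

theorem Function.Periodic.deriv {E : Type*} [NormedAddCommGroup E] [NormedSpace ℝ E]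
    {f : ℝ → E} {L : ℝ} (hf : Function.Periodic f L) : Function.Periodic (deriv f) L :=
  fun x => by rw [← deriv_comp_add_const, hf.funext]

section

variable {E : Type*} [NormedAddCommGroup E] [NormedSpace ℝ E] [CompleteSpace E]

theorem Function.Periodic.intervalIntegral_intervalIntegral_comp_add {g : ℝ → E} {L : ℝ}
    (hg : Continuous g) (hper : Function.Periodic g L) (a b : ℝ) :
    ∫ t in 0..L, ∫ u in a..b, g (t + u) = (b - a) • ∫ t in 0..L, g t := by
  have hint : IntegrableOn (Function.uncurry fun t u => g (t + u)) (uIoc 0 L ×ˢ uIoc a b) :=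
    ((hg.comp continuous_add).continuousOn.integrableOn_compact
      (isCompact_uIcc.prod isCompact_uIcc)).mono_set (prod_mono uIoc_subset_uIcc uIoc_subset_uIcc)
  have hshift (u : ℝ) : ∫ t in 0..L, g (t + u) = ∫ t in 0..L, g t := by
    simpa [integral_comp_add_right, add_comm] using hper.intervalIntegral_add_eq u 0
  rw [intervalIntegral_intervalIntegral_swap hint]
  simp only [hshift, intervalIntegral.integral_const]

theorem norm_sub_le_integral_norm_deriv {f : ℝ → E} (hf : ContDiff ℝ 1 f) (t : ℝ) {s h : ℝ}
    (hs : s ∈ Icc (-h) h) : ‖f (t + s) - f t‖ ≤ ∫ u in -h..h, ‖deriv f (t + u)‖ := by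
  obtain ⟨hs₁, hs₂⟩ := hs
  have hf' : Continuous (deriv f) := hf.continuous_deriv le_rfl
  calc ‖f (t + s) - f t‖ = ‖∫ x in t..t + s, deriv f x‖ := by
        rw [integral_deriv_eq_sub (fun x _ => (hf.differentiable one_ne_zero) x)
          (hf'.intervalIntegrable _ _)]
    _ ≤ ∫ x in uIoc t (t + s), ‖deriv f x‖ := norm_integral_le_integral_norm_uIoc
    _ ≤ ∫ x in Ioc (t + -h) (t + h), ‖deriv f x‖ :=
        setIntegral_mono_set hf'.norm.integrableOn_Ioc (.of_forall fun _ => norm_nonneg _) <|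
          .of_forall <| Ioc_subset_Ioc (le_min (by linarith) (by linarith))
            (max_le (by linarith) (by linarith))
    _ = ∫ u in -h..h, ‖deriv f (t + u)‖ := by
        rw [integral_comp_add_left (fun x => ‖deriv f x‖), integral_of_le (by linarith)]

theorem iSup_norm_sub_le_integral_norm_deriv {f : ℝ → E} (hf : ContDiff ℝ 1 f) (t : ℝ) {h : ℝ}
    (hh : 0 ≤ h) :
    ⨆ s : Icc (-h) h, ‖f (t + s) - f t‖ ≤ ∫ u in -h..h, ‖deriv f (t + u)‖ :=
  have : Nonempty (Icc (-h) h) := ⟨⟨0, by linarith, hh⟩⟩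
  ciSup_le fun s => norm_sub_le_integral_norm_deriv hf t s.2

end

theorem stmt_2 (L : ℝ) (hL : 0 < L) (f : ℝ → EuclideanSpace ℝ (Fin 2))
    (hper : Function.Periodic f L) (hf : ContDiff ℝ 1 f) (h : ℝ) (hh : 0 < h) :
    (∫ t in (0:ℝ)..L, ⨆ lam : Set.Icc (-h) h, ‖f (t + (lam : ℝ)) - f t‖) ≤
      2 * h * ∫ t in (0:ℝ)..L, ‖deriv f t‖ := by
  have hf' : Continuous fun t => ‖deriv f t‖ := (hf.continuous_deriv le_rfl).norm
  have hper' : Function.Periodic (fun t => ‖deriv f t‖) L := hper.deriv.comp _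
  calc _ ≤ ∫ t in (0:ℝ)..L, ∫ u in -h..h, ‖deriv f (t + u)‖ := by
        simp only [integral_of_le hL.le]
        -- only the majorant needs to be integrable here, not the supremum
        refine integral_mono_of_nonneg (.of_forall fun t => Real.iSup_nonneg fun _ => norm_nonneg _)
          ?_ (.of_forall fun t => iSup_norm_sub_le_integral_norm_deriv hf t hh.le)
        exact (continuous_parametric_intervalIntegral_of_continuous'
          (f := fun t u => ‖deriv f (t + u)‖) (hf'.comp continuous_add) _ _).integrableOn_Ioc
    _ = 2 * h * ∫ t in (0:ℝ)..L, ‖deriv f t‖ := by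
        rw [hper'.intervalIntegral_intervalIntegral_comp_add hf', smul_eq_mul]
        ring
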